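/- arXiv:2105.01385 — 2 statements merged into one kernel-verified Lean document; each statement's English description precedes it below -/
import Mathlib

section
/- Let R be a commutative ring, M and N R-modules, and f an R-linear endomorphism of M, g an R-linear endomorphism of N, with f^(r₁+1) = 0 and g^(r₂+1) = 0 for natural numbers r₁, r₂. Then the endomorphism f ⊗ id_N + id_M ⊗ g of the tensor product M ⊗_R N satisfies (f ⊗ id_N + id_M ⊗ g)^(r₁+r₂+1) = 0. -/
open TensorProduct

private lemma comm_nilp {A : Type*} [Ring A] {a b : A} (h : Commute a b) {m n : ℕ}
    (ha : a ^ (m + 1) = 0) (hb : b ^ (n + 1) = 0) : (a + b) ^ (m + n + 1) = 0 := by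
  rw [h.add_pow]
  apply Finset.sum_eq_zero
  intro i hi
  rcases le_or_gt (m + 1) i with h1 | h1
  · rw [show a ^ i = a ^ (m + 1) * a ^ (i - (m + 1)) by
      rw [← pow_add, Nat.add_sub_cancel' h1], ha]
    simp
  · have h2 : n + 1 ≤ m + n + 1 - i := by omega
    rw [show b ^ (m + n + 1 - i) = b ^ (n + 1) * b ^ (m + n + 1 - i - (n + 1)) by
      rw [← pow_add, Nat.add_sub_cancel' h2], hb]
    simp

/-- If `f ^ (r₁+1) = 0` on `M` and `g ^ (r₂+1) = 0` on `N`, then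
`(f ⊗ id + id ⊗ g) ^ (r₁+r₂+1) = 0` on `M ⊗[R] N`. -/
theorem tensor_sum_nilpotent (R : Type*) [CommRing R]
    (M N : Type*) [AddCommGroup M] [Module R M] [AddCommGroup N] [Module R N]
    (r₁ r₂ : ℕ) (f : Module.End R M) (g : Module.End R N)
    (hf : f ^ (r₁ + 1) = 0) (hg : g ^ (r₂ + 1) = 0) :
    ((TensorProduct.map f LinearMap.id + TensorProduct.map LinearMap.id g :
        Module.End R (M ⊗[R] N)) ^ (r₁ + r₂ + 1)) = 0 := by
  have hcomm : Commute (TensorProduct.map f LinearMap.id : Module.End R (M ⊗[R] N))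
      (TensorProduct.map LinearMap.id g) := by
    unfold Commute SemiconjBy
    rw [Module.End.mul_eq_comp, Module.End.mul_eq_comp, ← TensorProduct.map_comp,
      ← TensorProduct.map_comp]
    simp
  have ha : (TensorProduct.map f LinearMap.id : Module.End R (M ⊗[R] N)) ^ (r₁ + 1) = 0 := by
    rw [TensorProduct.map_pow, hf]
    ext m n
    simp
  have hb : (TensorProduct.map LinearMap.id g : Module.End R (M ⊗[R] N)) ^ (r₂ + 1) = 0 := by
    rw [TensorProduct.map_pow, hg]
    ext m n
    simp
  exact comm_nilp hcomm ha hb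
end

section
/- Let R be a commutative ring, M and N R-modules, and r₁, r₂ natural numbers such that (r₁ + r₂)! is invertible in R. Let f be an R-linear endomorphism of M with f^(r₁+1) = 0 and g an R-linear endomorphism of N with g^(r₂+1) = 0. Then, in the endomorphism algebra of M ⊗_R N, exp(f ⊗ id_N + id_M ⊗ g) = exp(f) ⊗ exp(g), where exp(x) = ∑_{n=0}^{r₁+r₂} (n!)⁻¹ • xⁿ denotes the truncated exponential and exp(f) ⊗ exp(g) denotes the endomorphism of M ⊗_R N induced by exp(f) and exp(g) on the two factors. -/
/-!
Since `f ⊗ 1` and `1 ⊗ g` commute, the binomial theorem writes `(f ⊗ 1 + 1 ⊗ g)ⁿ / n!` as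
`∑_{a+b=n} (fᵃ ⊗ gᵇ) / (a! b!)`, which only needs `n!` to be invertible. Nilpotency kills every
term with `a > r₁` or `b > r₂`, so the exponential of the sum and the product of the exponentials
both collapse to the same sum over the box `a ≤ r₁`, `b ≤ r₂`.
-/

open TensorProduct
open Finset
open scoped Nat

noncomputable def truncExp (R : Type*) {A : Type*} [CommSemiring R] [Semiring A] [Algebra R A]
    (r : ℕ) (x : A) : A :=
  ∑ n ∈ range (r + 1), Ring.inverse (n ! : R) • x ^ n

theorem Ring.inverse_factorial_add_mul_choose {R : Type*} [CommSemiring R] {k l : ℕ}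
    (h : IsUnit ((k + l)! : R)) :
    Ring.inverse ((k + l)! : R) * ((k + l).choose k : R) =
      Ring.inverse (k ! : R) * Ring.inverse (l ! : R) := by
  have hfac : ((k + l)! : R) = (k + l).choose k * (k ! * l !) := by
    rw [← Nat.choose_mul_factorial_mul_factorial (Nat.le_add_right k l), Nat.add_sub_cancel_left]
    push_cast
    ring
  rw [hfac] at h ⊢
  rw [Ring.mul_inverse_rev, Ring.inverse_mul_cancel_right _ _ (isUnit_of_mul_isUnit_left h),
    Ring.mul_inverse_rev, mul_comm]

theorem Commute.inverse_factorial_smul_add_pow {R A : Type*} [CommSemiring R] [Semiring A]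
    [Algebra R A] {x y : A} (h : Commute x y) {n : ℕ} (hn : IsUnit (n ! : R)) :
    Ring.inverse (n ! : R) • (x + y) ^ n =
      ∑ p ∈ antidiagonal n,
        (Ring.inverse (p.1 ! : R) * Ring.inverse (p.2 ! : R)) • (x ^ p.1 * y ^ p.2) := by
  rw [h.add_pow', smul_sum]
  refine sum_congr rfl fun ⟨k, l⟩ hkl => ?_
  obtain rfl : k + l = n := mem_antidiagonal.mp hkl
  rw [← Nat.cast_smul_eq_nsmul R, smul_smul, Ring.inverse_factorial_add_mul_choose hn]

theorem Finset.sum_range_sum_antidiagonal_eq_sum {M : Type*} [AddCommMonoid M]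
    {f : ℕ × ℕ → M} {s : Finset (ℕ × ℕ)} {r : ℕ} (hs : ∀ p ∈ s, p.1 + p.2 ≤ r)
    (hf : ∀ p ∉ s, f p = 0) :
    ∑ n ∈ range (r + 1), ∑ p ∈ antidiagonal n, f p = ∑ p ∈ s, f p := by
  rw [← sum_fiberwise_of_maps_to (g := fun p => p.1 + p.2) (t := range (r + 1))
    fun p hp => mem_range_succ_iff.mpr (hs p hp)]
  refine sum_congr rfl fun n _ =>
    (sum_subset (fun p hp => ?_) fun p hpn hp => hf p fun hps => ?_).symm
  · exact mem_antidiagonal.mpr (mem_filter.mp hp).2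
  · exact hp (mem_filter.mpr ⟨hps, mem_antidiagonal.mp hpn⟩)

theorem truncExp_add_of_commute (R : Type*) {A : Type*} [CommSemiring R] [Semiring A]
    [Algebra R A] {x y : A} (hxy : Commute x y) {r₁ r₂ : ℕ} (hx : x ^ (r₁ + 1) = 0)
    (hy : y ^ (r₂ + 1) = 0) (hr : IsUnit ((r₁ + r₂)! : R)) :
    truncExp R (r₁ + r₂) (x + y) = truncExp R (r₁ + r₂) x * truncExp R (r₁ + r₂) y := by
  set term : ℕ × ℕ → A := fun p =>
    (Ring.inverse (p.1 ! : R) * Ring.inverse (p.2 ! : R)) • (x ^ p.1 * y ^ p.2)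
  set box := range (r₁ + 1) ×ˢ range (r₂ + 1)
  have term_eq_zero : ∀ p ∉ box, term p = 0 := by
    rintro ⟨a, b⟩ hab
    simp only [box, mem_product, mem_range, Nat.lt_succ_iff, not_and_or, not_le] at hab
    rcases hab with ha | hb
    · simp [term, pow_eq_zero_of_le ha hx]
    · simp [term, pow_eq_zero_of_le hb hy]
  calc truncExp R (r₁ + r₂) (x + y)
      = ∑ n ∈ range (r₁ + r₂ + 1), ∑ p ∈ antidiagonal n, term p :=
        sum_congr rfl fun n hn => hxy.inverse_factorial_smul_add_pow <|
          isUnit_of_dvd_unit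
            (Nat.cast_dvd_cast (Nat.factorial_dvd_factorial (mem_range_succ_iff.mp hn))) hr
    _ = ∑ p ∈ box, term p := sum_range_sum_antidiagonal_eq_sum (by simp [box]; omega) term_eq_zero
    _ = ∑ p ∈ range (r₁ + r₂ + 1) ×ˢ range (r₁ + r₂ + 1), term p :=
        sum_subset (product_subset_product (range_subset_range.mpr (by omega))
          (range_subset_range.mpr (by omega))) fun p _ hp => term_eq_zero p hp
    _ = truncExp R (r₁ + r₂) x * truncExp R (r₁ + r₂) y := by
        simp only [truncExp, sum_mul_sum, sum_product, term, smul_mul_smul_comm]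

theorem AlgHom.map_truncExp {R A B : Type*} [CommSemiring R] [Semiring A] [Semiring B]
    [Algebra R A] [Algebra R B] (e : A →ₐ[R] B) (r : ℕ) (x : A) :
    e (truncExp R r x) = truncExp R r (e x) := by
  simp only [truncExp, map_sum, map_smul, map_pow]

/-- If `(r₁ + r₂)!` is invertible in `R`, `f ^ (r₁+1) = 0` on `M` and `g ^ (r₂+1) = 0`
on `N`, then in `End (M ⊗[R] N)` one has `exp (f ⊗ id + id ⊗ g) = exp f ⊗ exp g`,
where `exp x = ∑_{n=0}^{r₁+r₂} (n!)⁻¹ • xⁿ` is the truncated exponential. -/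
theorem truncated_exp_tensor (R : Type*) [CommRing R]
    (M N : Type*) [AddCommGroup M] [Module R M] [AddCommGroup N] [Module R N]
    (r₁ r₂ : ℕ) (hR : IsUnit ((Nat.factorial (r₁ + r₂) : ℕ) : R))
    (f : Module.End R M) (g : Module.End R N)
    (hf : f ^ (r₁ + 1) = 0) (hg : g ^ (r₂ + 1) = 0) :
    (∑ n ∈ Finset.range (r₁ + r₂ + 1),
        (Ring.inverse ((Nat.factorial n : ℕ) : R)) •
          (TensorProduct.map f LinearMap.id + TensorProduct.map LinearMap.id g :
            Module.End R (M ⊗[R] N)) ^ n) =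
      TensorProduct.map
        (∑ n ∈ Finset.range (r₁ + r₂ + 1),
          (Ring.inverse ((Nat.factorial n : ℕ) : R)) • f ^ n)
        (∑ n ∈ Finset.range (r₁ + r₂ + 1),
          (Ring.inverse ((Nat.factorial n : ℕ) : R)) • g ^ n) := by
  let F := Module.End.rTensorAlgHom R M N
  let G := Module.End.lTensorAlgHom R N M
  have hcomm : Commute (F f) (G g) :=
    (LinearMap.rTensor_comp_lTensor (f := f) (g := g)).trans
      (LinearMap.lTensor_comp_rTensor (f := f) (g := g)).symm
  have hFf : F f ^ (r₁ + 1) = 0 := by rw [← map_pow, hf, map_zero]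
  have hGg : G g ^ (r₂ + 1) = 0 := by rw [← map_pow, hg, map_zero]
  -- `F f` and `G g` unfold to `map f id` and `map id g`, so the goal is this chain up to `rfl`.
  calc truncExp R (r₁ + r₂) (F f + G g)
      = truncExp R (r₁ + r₂) (F f) * truncExp R (r₁ + r₂) (G g) :=
        truncExp_add_of_commute R hcomm hFf hGg hR
    _ = F (truncExp R (r₁ + r₂) f) * G (truncExp R (r₁ + r₂) g) := by
        rw [F.map_truncExp, G.map_truncExp]
    _ = _ := LinearMap.rTensor_comp_lTensor ..
end
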